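/- Let S = ℚ[α]. Consider the submodule M ⊂ S⁴ of quadruples (f_x, f_y, f_z, f_t) with f_x ≡ f_y ≡ f_z ≡ f_t mod α and f_x − f_y + f_z − f_t ≡ 0 mod α². Then the intersection of M with the subspace {f_y = f_t} is isomorphic, via (f_x, f_y, f_z, f_y) ↦ (f_x, f_y, f_z), to the submodule of triples (f_x, f_y, f_z) ∈ S³ with f_x ≡ f_y ≡ f_z mod α and f_x − 2f_y + f_z ≡ 0 mod α². -/

import Mathlib

open Polynomial

namespace Stmt11

/-- Quadruple congruence conditions for the Hirzebruch surface `F_n`. -/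
def P4 (f : ℚ[X] × ℚ[X] × ℚ[X] × ℚ[X]) : Prop :=
  X ∣ f.1 - f.2.1 ∧ X ∣ f.2.1 - f.2.2.1 ∧ X ∣ f.2.2.1 - f.2.2.2 ∧
    X ^ 2 ∣ f.1 - f.2.1 + f.2.2.1 - f.2.2.2

/-- Triple congruence conditions for the weighted projective plane `P_n`. -/
def P3 (g : ℚ[X] × ℚ[X] × ℚ[X]) : Prop :=
  X ∣ g.1 - g.2.1 ∧ X ∣ g.2.1 - g.2.2 ∧ X ^ 2 ∣ g.1 - 2 * g.2.1 + g.2.2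

theorem P4_diag_iff_P3 (fx fy fz : ℚ[X]) : P4 (fx, fy, fz, fy) ↔ P3 (fx, fy, fz) := by
  have hsum : fx - fy + fz - fy = fx - 2 * fy + fz := by ring
  simp only [P4, P3, hsum, dvd_sub_comm (b := fz), and_self_left]

/-- The intersection of the quadruple congruence module with the subspace `{f_y = f_t}`
maps bijectively, via `(f_x, f_y, f_z, f_y) ↦ (f_x, f_y, f_z)`, onto the triple
congruence module with relation `f_x − 2 f_y + f_z ≡ 0 mod α²`. -/
theorem contraction_isomorphism :
    (∀ fx fy fz : ℚ[X], P4 (fx, fy, fz, fy) ↔ P3 (fx, fy, fz)) ∧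
    Set.BijOn (fun f : ℚ[X] × ℚ[X] × ℚ[X] × ℚ[X] => (f.1, f.2.1, f.2.2.1))
      {f | P4 f ∧ f.2.1 = f.2.2.2} {g | P3 g} := by
  refine ⟨P4_diag_iff_P3, Set.InvOn.bijOn (f' := fun g => (g.1, g.2.1, g.2.2, g.2.1))
    ⟨?_, fun _ _ => rfl⟩ ?_ ?_⟩
  · rintro ⟨fx, fy, fz, ft⟩ ⟨-, hyt : fy = ft⟩
    rw [hyt]
  · rintro ⟨fx, fy, fz, ft⟩ ⟨hf, hyt : fy = ft⟩
    subst hyt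
    exact (P4_diag_iff_P3 fx fy fz).mp hf
  · rintro ⟨gx, gy, gz⟩ hg
    exact ⟨(P4_diag_iff_P3 gx gy gz).mpr hg, rfl⟩

end Stmt11
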